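/- Let n_rest > χ and j_0 = ⌈log_{1+ε}(n_rest/χ)⌉. For each j ≥ 0 and i ∈ [n_rest], let X_{i,j} be pairwise independent (in i) 0/1 variables with P(X_{i,j}=1) = (1+ε)^{−j}, and let Y_j = Σ_i X_{i,j}. Then for each fixed j′ > j_0 + 2, P(Y_{j′} > χ/(1+ε)^2) ≤ ((1+ε)^3/(ε^2 χ)) · (1+ε)^{−(j′ − j_0 − 3)}, and consequently P(∃ j′ > j_0 + 2 with Y_{j′} > χ/(1+ε)^2) ≤ (1+ε)^4/(ε^3 χ). -/

import Mathlib

open MeasureTheory ProbabilityTheory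

/-! A sum of pairwise independent 0/1 variables has variance at most its mean. At level `j'` the
mean `n_rest (1+ε)^{-j'}` is at most `χ (1+ε)^{-(j'-j₀)}`, which lies below the threshold
`χ/(1+ε)²` by at least `χε/(1+ε)³`, so Chebyshev's inequality gives the bound for each level.
These bounds decay geometrically in `j'`, and a union bound sums them. -/

lemma le_zpow_ceil_logb {b x : ℝ} (hb : 1 < b) (hx : 0 ≤ x) : x ≤ b ^ ⌈Real.logb b x⌉ := by
  rcases hx.eq_or_lt with rfl | hx
  · positivity
  rw [← Real.rpow_intCast, ← Real.logb_le_iff_le_rpow hb hx]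
  exact Int.le_ceil _

section

variable {Ω : Type*} [MeasurableSpace Ω] {μ : Measure Ω}

lemma memLp_of_zero_or_one {X : Ω → ℝ} [IsFiniteMeasure μ] (hX : Measurable X)
    (h01 : ∀ ω, X ω = 0 ∨ X ω = 1) (p : ENNReal) : MemLp X p μ :=
  MemLp.of_bound hX.aestronglyMeasurable 1 <| ae_of_all _ fun ω => by
    rcases h01 ω with h | h <;> simp [h]

lemma integral_eq_measureReal_of_zero_or_one {X : Ω → ℝ} (hX : Measurable X)
    (h01 : ∀ ω, X ω = 0 ∨ X ω = 1) : μ[X] = μ.real {ω | X ω = 1} := by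
  have hS : MeasurableSet {ω | X ω = 1} := hX (measurableSet_singleton 1)
  calc μ[X] = ∫ ω, {ω | X ω = 1}.indicator 1 ω ∂μ := by
        congr 1
        funext ω
        rcases h01 ω with h | h <;> simp [h]
    _ = μ.real {ω | X ω = 1} := integral_indicator_one hS

lemma variance_le_integral_of_zero_or_one {X : Ω → ℝ} [IsProbabilityMeasure μ] (hX : Measurable X)
    (h01 : ∀ ω, X ω = 0 ∨ X ω = 1) : Var[X; μ] ≤ μ[X] := by
  have hsq : X ^ 2 = X := by
    funext ω
    rcases h01 ω with h | h <;> simp [h]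
  rw [variance_eq_sub (memLp_of_zero_or_one hX h01 2), hsq]
  exact sub_le_self _ (sq_nonneg _)

variable {ι : Type*} [Fintype ι]

lemma integral_sum_eq_card_mul_of_zero_or_one [IsFiniteMeasure μ] {X : ι → Ω → ℝ}
    (hX : ∀ i, Measurable (X i))
    (h01 : ∀ i ω, X i ω = 0 ∨ X i ω = 1) {p : ℝ} (hp0 : 0 ≤ p)
    (hp : ∀ i, μ {ω | X i ω = 1} = ENNReal.ofReal p) :
    μ[∑ i, X i] = Fintype.card ι * p := by
  simp only [Finset.sum_apply]
  rw [integral_finsetSum _ fun i _ => (memLp_of_zero_or_one (hX i) (h01 i) 1).integrable le_rfl]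
  simp only [integral_eq_measureReal_of_zero_or_one (hX _) (h01 _), measureReal_def, hp,
    ENNReal.toReal_ofReal hp0, Finset.sum_const, Finset.card_univ, nsmul_eq_mul]

lemma variance_sum_le_integral_of_zero_or_one [IsProbabilityMeasure μ] {X : ι → Ω → ℝ}
    (hX : ∀ i, Measurable (X i)) (h01 : ∀ i ω, X i ω = 0 ∨ X i ω = 1)
    (hpair : Pairwise fun i j => X i ⟂ᵢ[μ] X j) : Var[∑ i, X i; μ] ≤ μ[∑ i, X i] := by
  rw [IndepFun.variance_sum (fun i _ => memLp_of_zero_or_one (hX i) (h01 i) 2)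
    fun i _ j _ hij => hpair hij]
  simp only [Finset.sum_apply]
  rw [integral_finsetSum _ fun i _ => (memLp_of_zero_or_one (hX i) (h01 i) 1).integrable le_rfl]
  exact Finset.sum_le_sum fun i _ => variance_le_integral_of_zero_or_one (hX i) (h01 i)

lemma measure_lt_le_variance_div_sq [IsFiniteMeasure μ] {Y : Ω → ℝ} (hY : MemLp Y 2 μ) {t : ℝ}
    (ht : μ[Y] < t) : μ {ω | t < Y ω} ≤ ENNReal.ofReal (Var[Y; μ] / (t - μ[Y]) ^ 2) := by
  refine (measure_mono fun ω (hω : t < Y ω) => ?_).trans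
    (meas_ge_le_variance_div_sq hY (sub_pos.2 ht))
  exact (sub_le_sub_right hω.le _).trans (le_abs_self _)

lemma measure_sum_gt_le_of_zero_or_one [IsProbabilityMeasure μ]
    {X : ι → Ω → ℝ} (hX : ∀ i, Measurable (X i)) (h01 : ∀ i ω, X i ω = 0 ∨ X i ω = 1)
    (hpair : Pairwise fun i j => X i ⟂ᵢ[μ] X j) {t : ℝ} (ht : μ[∑ i, X i] < t) :
    μ {ω | t < ∑ i, X i ω} ≤ ENNReal.ofReal (μ[∑ i, X i] / (t - μ[∑ i, X i]) ^ 2) := by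
  have hY : MemLp (∑ i, X i) 2 μ :=
    memLp_finsetSum' _ fun i _ => memLp_of_zero_or_one (hX i) (h01 i) 2
  calc μ {ω | t < ∑ i, X i ω} = μ {ω | t < (∑ i, X i) ω} := by simp only [Finset.sum_apply]
    _ ≤ ENNReal.ofReal (Var[∑ i, X i; μ] / (t - μ[∑ i, X i]) ^ 2) :=
        measure_lt_le_variance_div_sq hY ht
    _ ≤ _ := by
        gcongr
        exact variance_sum_le_integral_of_zero_or_one hX h01 hpair

lemma measure_exists_le_of_zpow_decay {A : ℕ → Set Ω} {b C : ℝ} (hb : 1 < b) (hC : 0 ≤ C)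
    (k0 : ℤ) (hA : ∀ j : ℕ, k0 ≤ j → μ (A j) ≤ ENNReal.ofReal (C * b ^ (-((j : ℤ) - k0)))) :
    μ {ω | ∃ j : ℕ, k0 ≤ j ∧ ω ∈ A j} ≤ ENNReal.ofReal (C * b / (b - 1)) := by
  set N := k0.toNat
  have hq0 : 0 ≤ b⁻¹ := by positivity
  have hq1 : b⁻¹ < 1 := inv_lt_one_of_one_lt₀ hb
  have hterm (k : ℕ) : μ (A (k + N)) ≤ ENNReal.ofReal (C * b⁻¹ ^ k) := by
    refine (hA (k + N) (by omega)).trans (ENNReal.ofReal_le_ofReal ?_)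
    rw [inv_pow, ← zpow_natCast, ← zpow_neg]
    gcongr
    · exact hb.le
    · omega
  calc μ {ω | ∃ j : ℕ, k0 ≤ j ∧ ω ∈ A j}
      ≤ μ (⋃ k : ℕ, A (k + N)) := measure_mono fun ω ⟨j, hj, hω⟩ =>
        Set.mem_iUnion.2 ⟨j - N, by rwa [Nat.sub_add_cancel (by omega)]⟩
    _ ≤ ∑' k, μ (A (k + N)) := measure_iUnion_le _
    _ ≤ ∑' k, ENNReal.ofReal (C * b⁻¹ ^ k) := ENNReal.tsum_le_tsum hterm
    _ = ENNReal.ofReal (∑' k, C * b⁻¹ ^ k) := (ENNReal.ofReal_tsum_of_nonneg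
        (fun k => by positivity) ((summable_geometric_of_lt_one hq0 hq1).mul_left C)).symm
    _ = ENNReal.ofReal (C * b / (b - 1)) := by
        rw [tsum_mul_left, tsum_geometric_of_lt_one hq0 hq1]
        congr 1
        field_simp

lemma measure_sum_gt_le_of_card_le_zpow [IsProbabilityMeasure μ] {X : ι → Ω → ℝ}
    (hX : ∀ i, Measurable (X i)) (h01 : ∀ i ω, X i ω = 0 ∨ X i ω = 1)
    (hpair : Pairwise fun i j => X i ⟂ᵢ[μ] X j) {ε χ : ℝ} (hε : 0 < ε) (hχ : 0 < χ) {j0 : ℤ}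
    (hcard : (Fintype.card ι : ℝ) ≤ χ * (1 + ε) ^ j0) {j : ℕ} (hj : j0 + 2 < j)
    (hp : ∀ i, μ {ω | X i ω = 1} = ENNReal.ofReal ((1 + ε) ^ (-(j : ℤ)))) :
    μ {ω | χ / (1 + ε) ^ 2 < ∑ i, X i ω} ≤
      ENNReal.ofReal ((1 + ε) ^ 3 / (ε ^ 2 * χ) * (1 + ε) ^ (-((j : ℤ) - j0 - 3))) := by
  set m := μ[∑ i, X i]
  set r : ℝ := (1 + ε) ^ (-((j : ℤ) - j0 - 3))
  have hm : m = Fintype.card ι * (1 + ε) ^ (-(j : ℤ)) :=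
    integral_sum_eq_card_mul_of_zero_or_one hX h01 (by positivity) hp
  have hm0 : 0 ≤ m := hm ▸ by positivity
  have hm_le : m ≤ χ * r / (1 + ε) ^ 3 := by
    have hr : r = (1 + ε) ^ j0 * (1 + ε) ^ (-(j : ℤ)) * (1 + ε) ^ 3 := by
      rw [← zpow_natCast, ← zpow_add₀ (by positivity), ← zpow_add₀ (by positivity)]
      simp only [r]
      congr 1
      push_cast
      ring
    rw [hm, hr]
    field_simp
    gcongr
  have hgap : χ * ε / (1 + ε) ^ 3 ≤ χ / (1 + ε) ^ 2 - m := by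
    have hr1 : r ≤ 1 := zpow_le_one_of_nonpos₀ (by linarith) (by omega)
    have : χ * r / (1 + ε) ^ 3 ≤ χ / (1 + ε) ^ 3 := by
      gcongr
      exact mul_le_of_le_one_right hχ.le hr1
    have hsplit : χ / (1 + ε) ^ 2 = χ / (1 + ε) ^ 3 + χ * ε / (1 + ε) ^ 3 := by
      field_simp
    linarith
  have hgap0 : 0 < χ * ε / (1 + ε) ^ 3 := by positivity
  refine (measure_sum_gt_le_of_zero_or_one hX h01 hpair (by linarith)).trans
    (ENNReal.ofReal_le_ofReal ?_)
  calc m / (χ / (1 + ε) ^ 2 - m) ^ 2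
      ≤ (χ * r / (1 + ε) ^ 3) / (χ * ε / (1 + ε) ^ 3) ^ 2 := by gcongr
    _ = (1 + ε) ^ 3 / (ε ^ 2 * χ) * r := by field_simp

end

theorem pairwise_bernoulli_upper_layers_general
    {Ω : Type*} [MeasureSpace Ω] [IsProbabilityMeasure (ℙ : Measure Ω)]
    (ε χ : ℝ) (hε0 : 0 < ε) (hχ0 : 0 < χ)
    (nrest : ℕ)
    (j0 : ℤ) (hj0 : j0 = ⌈Real.logb (1 + ε) ((nrest : ℝ) / χ)⌉)
    (X : ℕ → Fin nrest → Ω → ℝ) (hmeas : ∀ j i, Measurable (X j i))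
    (h01 : ∀ j i ω, X j i ω = 0 ∨ X j i ω = 1)
    (hp : ∀ j i, ℙ {ω | X j i ω = 1} = ENNReal.ofReal ((1 + ε) ^ (-(j : ℤ))))
    (hpair : ∀ j i i', i ≠ i' → IndepFun (X j i) (X j i') ℙ) :
    (∀ j' : ℕ, j0 + 2 < (j' : ℤ) →
      ℙ {ω | χ / (1 + ε) ^ 2 < ∑ i, X j' i ω} ≤
        ENNReal.ofReal
          ((1 + ε) ^ 3 / (ε ^ 2 * χ) * (1 + ε) ^ (-((j' : ℤ) - j0 - 3)))) ∧
    ℙ {ω | ∃ j' : ℕ, j0 + 2 < (j' : ℤ) ∧ χ / (1 + ε) ^ 2 < ∑ i, X j' i ω} ≤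
      ENNReal.ofReal ((1 + ε) ^ 4 / (ε ^ 3 * χ)) := by
  have hb : 1 < 1 + ε := by linarith
  have hcard : (Fintype.card (Fin nrest) : ℝ) ≤ χ * (1 + ε) ^ j0 := by
    have := le_zpow_ceil_logb hb (div_nonneg (Nat.cast_nonneg nrest) hχ0.le)
    rw [← hj0, div_le_iff₀ hχ0] at this
    simpa [mul_comm] using this
  have hlayer (j' : ℕ) (hj' : j0 + 2 < (j' : ℤ)) :=
    measure_sum_gt_le_of_card_le_zpow (hmeas j') (h01 j') (fun i i' => hpair j' i i') hε0 hχ0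
      hcard hj' (hp j')
  refine ⟨hlayer, ?_⟩
  calc ℙ {ω | ∃ j' : ℕ, j0 + 2 < (j' : ℤ) ∧ χ / (1 + ε) ^ 2 < ∑ i, X j' i ω}
      ≤ ℙ {ω | ∃ j' : ℕ, j0 + 3 ≤ (j' : ℤ) ∧ ω ∈ {ω | χ / (1 + ε) ^ 2 < ∑ i, X j' i ω}} :=
        measure_mono fun ω ⟨j', hj', hω⟩ => ⟨j', by omega, hω⟩
    _ ≤ ENNReal.ofReal ((1 + ε) ^ 3 / (ε ^ 2 * χ) * (1 + ε) / (1 + ε - 1)) :=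
        measure_exists_le_of_zpow_decay hb (by positivity) (j0 + 3) fun j' hj' =>
          (hlayer j' (by omega)).trans_eq (by rw [sub_sub])
    _ = ENNReal.ofReal ((1 + ε) ^ 4 / (ε ^ 3 * χ)) := by
        rw [add_sub_cancel_left]
        congr 1
        field_simp

/-- Let `n_rest > χ`, `j₀ = ⌈log_{1+ε}(n_rest/χ)⌉`, and for each `j`
let `X_{i,j}`, `i ∈ [n_rest]`, be pairwise independent (in `i`) 0/1 variables with
`P(X_{i,j}=1) = (1+ε)^{-j}`, `Y_j = Σ_i X_{i,j}`. Then for each `j' > j₀+2`,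
`P(Y_{j'} > χ/(1+ε)²) ≤ ((1+ε)³/(ε²χ))·(1+ε)^{-(j'-j₀-3)}`, and consequently
`P(∃ j' > j₀+2, Y_{j'} > χ/(1+ε)²) ≤ (1+ε)⁴/(ε³χ)`. -/
theorem pairwise_bernoulli_upper_layers
    {Ω : Type*} [MeasureSpace Ω] [IsProbabilityMeasure (ℙ : Measure Ω)]
    (ε χ : ℝ) (hε0 : 0 < ε) (hε1 : ε < 1) (hχ0 : 0 < χ)
    (nrest : ℕ) (hn : χ < (nrest : ℝ))
    (j0 : ℤ) (hj0 : j0 = ⌈Real.logb (1 + ε) ((nrest : ℝ) / χ)⌉)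
    (X : ℕ → Fin nrest → Ω → ℝ) (hmeas : ∀ j i, Measurable (X j i))
    (h01 : ∀ j i ω, X j i ω = 0 ∨ X j i ω = 1)
    (hp : ∀ j i, ℙ {ω | X j i ω = 1} = ENNReal.ofReal ((1 + ε) ^ (-(j : ℤ))))
    (hpair : ∀ j i i', i ≠ i' → IndepFun (X j i) (X j i') ℙ) :
    (∀ j' : ℕ, j0 + 2 < (j' : ℤ) →
      ℙ {ω | χ / (1 + ε) ^ 2 < ∑ i, X j' i ω} ≤
        ENNReal.ofReal
          ((1 + ε) ^ 3 / (ε ^ 2 * χ) * (1 + ε) ^ (-((j' : ℤ) - j0 - 3)))) ∧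
    ℙ {ω | ∃ j' : ℕ, j0 + 2 < (j' : ℤ) ∧ χ / (1 + ε) ^ 2 < ∑ i, X j' i ω} ≤
      ENNReal.ofReal ((1 + ε) ^ 4 / (ε ^ 3 * χ)) :=
  pairwise_bernoulli_upper_layers_general ε χ hε0 hχ0 nrest j0 hj0 X hmeas h01 hp hpair
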